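/- arXiv:1402.2102 — 2 statements merged into one kernel-verified Lean document; each statement's English description precedes it below -/
import Mathlib

section
/- For every path ρ in an unfolding of the constraint graph of a difference bounds constraint over N variables: lbcorners(ρ) = ∅ if and only if lcorners(ρ) = ∅. That is, ρ has no lb-corner subpath if and only if it has no long-corner subpath. -/
/- ## Difference bounds constraints and their relations -/

/-- Valuations of `N` integer variables. -/
abbrev Val (N : ℕ) := Fin N → ℤ

/-- An atomic proposition `u - v ≤ c` where `u, v` range over the unprimed
(`Sum.inl`) and primed (`Sum.inr`) variables. -/
abbrev Atom (N : ℕ) := (Fin N ⊕ Fin N) × (Fin N ⊕ Fin N) × ℤ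

/-- A vertex of an unfolded constraint graph: a position together with a variable. -/
abbrev Vtx (N : ℕ) := ℤ × Fin N

/-- A difference bounds constraint: a finite conjunction of atomic propositions. -/
structure DBC (N : ℕ) where
  atoms : Finset (Atom N)

/-- A path in an unfolded constraint graph: a first vertex followed by a list of
steps, each carrying a weight and a target vertex. -/
structure UPath (N : ℕ) where
  first : Vtx N
  steps : List (ℤ × Vtx N)

variable {N : ℕ}

def interp (ν ν' : Val N) : Fin N ⊕ Fin N → ℤ
  | Sum.inl i => ν i
  | Sum.inr i => ν' i

/-- The relation on valuations defined by a difference bounds constraint. -/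
def DBC.rel (R : DBC N) (ν ν' : Val N) : Prop :=
  ∀ a ∈ R.atoms, interp ν ν' a.1 - interp ν ν' a.2.1 ≤ a.2.2

/-- Relational composition. -/
def relComp (P Q : Val N → Val N → Prop) (ν ν' : Val N) : Prop :=
  ∃ μ, P ν μ ∧ Q μ ν'

/-- `n`-fold relational composition, with `relPow P 0` the identity relation. -/
def relPow (P : Val N → Val N → Prop) : ℕ → Val N → Val N → Prop
  | 0 => Eq
  | n + 1 => relComp P (relPow P n)

/-- A DB constraint is balanced when `x i - x j ≤ c` is a conjunct iff
`x' i - x' j ≤ c` is a conjunct. -/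
def DBC.Balanced (R : DBC N) : Prop :=
  ∀ (i j : Fin N) (c : ℤ),
    (Sum.inl i, Sum.inl j, c) ∈ R.atoms ↔ (Sum.inr i, Sum.inr j, c) ∈ R.atoms

/-- Forward one-directional: every atom is of the form `x i - x' j ≤ c`. -/
def DBC.IsFw (R : DBC N) : Prop :=
  ∀ a ∈ R.atoms, ∃ (i j : Fin N) (c : ℤ), a = (Sum.inl i, Sum.inr j, c)

/-- Backward one-directional: every atom is of the form `x' i - x j ≤ c`. -/
def DBC.IsBw (R : DBC N) : Prop :=
  ∀ a ∈ R.atoms, ∃ (i j : Fin N) (c : ℤ), a = (Sum.inr i, Sum.inl j, c)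

def DBC.IsOneDirectional (R : DBC N) : Prop := R.IsFw ∨ R.IsBw

/- ## Unfolded constraint graphs -/

/-- The endpoint of an atom placed at copy `p` of the unfolding: unprimed
variables live at position `p`, primed ones at position `p + 1`. -/
def endpt (p : ℤ) : Fin N ⊕ Fin N → Vtx N
  | Sum.inl i => (p, i)
  | Sum.inr i => (p + 1, i)

/-- Edge of the unfolding contributed by copy `p` of the constraint graph. -/
def DBC.EdgeAt (R : DBC N) (p : ℤ) (u v : Vtx N) (c : ℤ) : Prop :=
  ∃ s t, (s, t, c) ∈ R.atoms ∧ u = endpt p s ∧ v = endpt p t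

/-- Edge of the bi-infinite unfolding. -/
def DBC.Edge (R : DBC N) (u v : Vtx N) (c : ℤ) : Prop :=
  ∃ p : ℤ, R.EdgeAt p u v c

/-- Edge of the `n`-times unfolding `G_R^n` (copies `0, …, n-1`). -/
def DBC.EdgeN (R : DBC N) (n : ℕ) (u v : Vtx N) (c : ℤ) : Prop :=
  ∃ p : ℤ, 0 ≤ p ∧ p < (n : ℤ) ∧ R.EdgeAt p u v c

namespace UPath

/-- The list of vertices traversed by a path. -/
def vertices (ρ : UPath N) : List (Vtx N) := ρ.first :: ρ.steps.map Prod.snd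

/-- The last vertex of a path. -/
def last (ρ : UPath N) : Vtx N := (ρ.steps.map Prod.snd).getLastD ρ.first

/-- The weight of a path: the sum of its edge weights. -/
def weight (ρ : UPath N) : ℤ := (ρ.steps.map Prod.fst).sum

def posList (ρ : UPath N) : List ℤ := ρ.vertices.map Prod.fst

/-- The set of positions of the vertices of a path. -/
def posFinset (ρ : UPath N) : Finset ℤ := ρ.posList.toFinset

theorem posFinset_nonempty (ρ : UPath N) : ρ.posFinset.Nonempty := by
  refine ⟨ρ.first.1, ?_⟩
  simp [posFinset, posList, vertices]

/-- The extent of a path: the difference between its maximal and minimal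
position. -/
def extent (ρ : UPath N) : ℤ :=
  ρ.posFinset.max' ρ.posFinset_nonempty - ρ.posFinset.min' ρ.posFinset_nonempty

/-- The list of variables traversed by a path. -/
def varList (ρ : UPath N) : List (Fin N) := ρ.vertices.map Prod.snd

/-- The steps form a chain of edges w.r.t. the edge relation `E`. -/
def EdgeChain (E : Vtx N → Vtx N → ℤ → Prop) : Vtx N → List (ℤ × Vtx N) → Prop
  | _, [] => True
  | u, s :: rest => E u s.2 s.1 ∧ EdgeChain E s.2 rest

/-- The path lies in the bi-infinite unfolding of the constraint graph of `R`. -/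
def InUnf (R : DBC N) (ρ : UPath N) : Prop := EdgeChain R.Edge ρ.first ρ.steps

/-- The path lies in the `n`-times unfolding `G_R^n`. -/
def InUnfN (R : DBC N) (n : ℕ) (ρ : UPath N) : Prop :=
  EdgeChain (R.EdgeN n) ρ.first ρ.steps

/-- Concatenation (the caller must ensure `π.first = ρ.last` for this to be a
genuine path concatenation). -/
def append (ρ π : UPath N) : UPath N := ⟨ρ.first, ρ.steps ++ π.steps⟩

/-- Shift a path by `k` positions. -/
def shift (k : ℤ) (ρ : UPath N) : UPath N :=
  ⟨(ρ.first.1 + k, ρ.first.2), ρ.steps.map fun s => (s.1, (s.2.1 + k, s.2.2))⟩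

/-- Concatenation with implicit shifting: `π` is shifted so that its first
vertex is at the position of the last vertex of `ρ`. -/
def glue (ρ π : UPath N) : UPath N := ρ.append (shift (ρ.last.1 - π.first.1) π)

/-- `k`-fold concatenation of a (repeating) path with itself, each copy shifted
so that its first vertex coincides with the last vertex of the previous copy. -/
def pow (μ : UPath N) : ℕ → UPath N
  | 0 => ⟨μ.first, []⟩
  | k + 1 => (pow μ k).glue μ

def IsVertical (ρ : UPath N) : Prop := ρ.last.1 = ρ.first.1

def IsForward (ρ : UPath N) : Prop := ρ.first.1 < ρ.last.1

def IsBackward (ρ : UPath N) : Prop := ρ.last.1 < ρ.first.1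

/-- A path is repeating if its endpoints are copies of the same variable at
different positions. -/
def IsRepeating (ρ : UPath N) : Prop := ρ.first.1 ≠ ρ.last.1 ∧ ρ.first.2 = ρ.last.2

/-- Relative length: the absolute difference of the first and last positions. -/
def relLen (ρ : UPath N) : ℤ := |ρ.last.1 - ρ.first.1|

/-- Right corner of some extent `d`: a nonempty vertical path whose positions
are exactly `{k, …, k+d}` where `k` is its first (= last) position. -/
def IsRightCorner (ρ : UPath N) : Prop :=
  ρ.steps ≠ [] ∧ ρ.last.1 = ρ.first.1 ∧
  ∃ d : ℕ, ρ.posFinset = Finset.Icc ρ.first.1 (ρ.first.1 + (d : ℤ))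

/-- Left corner of some extent `d`: positions exactly `{k−d, …, k}`. -/
def IsLeftCorner (ρ : UPath N) : Prop :=
  ρ.steps ≠ [] ∧ ρ.last.1 = ρ.first.1 ∧
  ∃ d : ℕ, ρ.posFinset = Finset.Icc (ρ.first.1 - (d : ℤ)) ρ.first.1

def IsCorner (ρ : UPath N) : Prop := ρ.IsRightCorner ∨ ρ.IsLeftCorner

/-- A corner is basic if its start/end position does not occur among the
positions of its intermediate vertices. -/
def IsBasic (ρ : UPath N) : Prop :=
  ∀ s ∈ ρ.steps.dropLast, s.2.1 ≠ ρ.first.1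

/-- A long corner: a corner of extent exceeding `N²`. -/
def IsLongCorner (ρ : UPath N) : Prop := ρ.IsCorner ∧ (N : ℤ) ^ 2 < ρ.extent

/-- An lb-corner: a corner that is both long and basic. -/
def IsLBCorner (ρ : UPath N) : Prop := ρ.IsLongCorner ∧ ρ.IsBasic

/-- `θ` is a (contiguous) subpath of `ρ`. -/
def IsSubpath (θ ρ : UPath N) : Prop :=
  ∃ pre post, ρ.steps = pre ++ θ.steps ++ post ∧ θ.first = (UPath.mk ρ.first pre).last

/-- A path is essential if its traversed variables are pairwise distinct,
except that the first and the last variable may coincide. -/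
def IsEssential (ρ : UPath N) : Prop :=
  ∀ (a b : ℕ) (ha : a < ρ.varList.length) (hb : b < ρ.varList.length),
    a < b → ρ.varList.get ⟨a, ha⟩ = ρ.varList.get ⟨b, hb⟩ →
      a = 0 ∧ b = ρ.varList.length - 1

/-- An extremal path of `G_R^n`: both endpoints are at position `0` or `n`. -/
def IsExtremalIn (n : ℕ) (ρ : UPath N) : Prop :=
  (ρ.first.1 = 0 ∨ ρ.first.1 = (n : ℤ)) ∧ (ρ.last.1 = 0 ∨ ρ.last.1 = (n : ℤ))

/-- `ρ'` is compatible with `ρ`: same first vertex, same last vertex and weight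
not greater than that of `ρ`. -/
def Compatible (ρ' ρ : UPath N) : Prop :=
  ρ'.first = ρ.first ∧ ρ'.last = ρ.last ∧ ρ'.weight ≤ ρ.weight

/-- A path in `G_R^n` is normalized if none of its subpaths traversing only
positions in `{N², …, n−N²}` is a long corner. -/
def IsNormalized (n : ℕ) (ρ : UPath N) : Prop :=
  ∀ θ : UPath N, θ.IsSubpath ρ →
    θ.posFinset ⊆ Finset.Icc ((N : ℤ) ^ 2) ((n : ℤ) - (N : ℤ) ^ 2) →
    ¬ θ.IsLongCorner

end UPath

/- ## UPath schemes -/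

/-- `σ.λ*.σ'` is a path scheme: `λ` is empty or an essential repeating path,
the variables match up for concatenation, and `σ.λ.σ'` is a non-empty path. -/
def IsSchemeTriple (σ lam σ' : UPath N) : Prop :=
  (lam.steps = [] ∨ (lam.IsEssential ∧ lam.IsRepeating)) ∧
  lam.first.2 = σ.last.2 ∧ σ'.first.2 = lam.last.2 ∧
  (σ.glue (lam.glue σ')).steps ≠ []

/-- The element `σ.λ^m.σ'` of the set of paths denoted by the scheme `σ.λ*.σ'`. -/
def schemeElem (σ lam σ' : UPath N) (m : ℕ) : UPath N :=
  σ.glue ((lam.pow m).glue σ')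

/-- Shape of the `λ` component of a scheme of the class `Π_{ijkpq}`:
a path `x_k^(0) → … → x_k^(p)` of length `p` in the unfolding. -/
def LamShape (R : DBC N) (k : Fin N) (p : ℕ) (lam : UPath N) : Prop :=
  lam.InUnf R ∧ lam.first = ((0 : ℤ), k) ∧ lam.last = ((p : ℤ), k) ∧
  lam.steps.length = p

/-- Shape of the `σ, σ'` components of a scheme of the class `Π_{ijkpq}`:
`σ : x_i^(0) → … → x_k^(r)` and `σ' : x_k^(r) → … → x_j^(q)` for some
`0 ≤ r ≤ q`, with `|σ.σ'| = q`. -/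
def SigmaShape (R : DBC N) (i j k : Fin N) (q : ℕ) (σ σ' : UPath N) : Prop :=
  ∃ r : ℕ, r ≤ q ∧ σ.InUnf R ∧ σ'.InUnf R ∧
    σ.first = ((0 : ℤ), i) ∧ σ.last = ((r : ℤ), k) ∧
    σ'.first = ((r : ℤ), k) ∧ σ'.last = ((q : ℤ), j) ∧
    σ.steps.length + σ'.steps.length = q

/-- Membership of the scheme `σ.λ*.σ'` in the class `Π_{ijkpq}`. -/
def InPi (R : DBC N) (i j k : Fin N) (p q : ℕ) (σ lam σ' : UPath N) : Prop :=
  IsSchemeTriple σ lam σ' ∧ LamShape R k p lam ∧ SigmaShape R i j k q σ σ'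

/-- The set `S_ij` of quadruples `(|σ.σ'|, |λ|, w(σ.σ'), w(λ))` arising from the
minimal representative schemes `θ_{ijkpq}` of the nonempty classes `Π_{ijkpq}`. -/
def Sset (R : DBC N) (i j : Fin N) : Set (ℕ × ℕ × ℤ × ℤ) :=
  { t | ∃ (k : Fin N) (p q : ℕ) (σ lam σ' : UPath N),
      p ≤ N ∧ q ≤ N ^ 4 ∧ 0 < p + q ∧
      (∃ ν μ ν' : UPath N, InPi R i j k p q ν μ ν') ∧
      LamShape R k p lam ∧
      (∀ lam', LamShape R k p lam' → lam.weight ≤ lam'.weight) ∧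
      SigmaShape R i j k q σ σ' ∧
      (∀ σ₁ σ₁', SigmaShape R i j k q σ₁ σ₁' →
        σ.weight + σ'.weight ≤ σ₁.weight + σ₁'.weight) ∧
      t = (q, p, σ.weight + σ'.weight, lam.weight) }

/- ## Segments -/

/-- An edge from `u` to `v` has both endpoints at positions within `{p, …, q}`. -/
def StepInRange (p q : ℤ) (u v : Vtx N) : Prop :=
  p ≤ u.1 ∧ u.1 ≤ q ∧ p ≤ v.1 ∧ v.1 ≤ q

/-- `ξ` is an element of `segments(ρ, p, q)`: a nonempty maximal subpath of `ρ`
whose positions lie within `{p, …, q}`, immediately preceded and followed (if at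
all) by edges not lying within `{p, …, q}`. -/
def IsSegmentOf (ρ : UPath N) (p q : ℤ) (ξ : UPath N) : Prop :=
  ξ.steps ≠ [] ∧
  ∃ pre post, ρ.steps = pre ++ ξ.steps ++ post ∧
    ξ.first = (UPath.mk ρ.first pre).last ∧
    ξ.posFinset ⊆ Finset.Icc p q ∧
    (∀ pre' c u, pre = pre' ++ [(c, u)] →
      ¬ StepInRange p q (UPath.mk ρ.first pre').last u) ∧
    (∀ c v post', post = (c, v) :: post' → ¬ StepInRange p q ξ.last v)

/- ## The strengthened relation and one-directional approximations -/

/-- `S_fw`: the valuations `ν` such that `∃ ν'. (ν,ν') ∈ R^{N²}`. -/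
def Sfw (R : DBC N) (ν : Val N) : Prop := ∃ ν', relPow R.rel (N ^ 2) ν ν'

/-- `S_bw`: the valuations `ν'` such that `∃ ν. (ν,ν') ∈ R^{N²}`. -/
def Sbw (R : DBC N) (ν' : Val N) : Prop := ∃ ν, relPow R.rel (N ^ 2) ν ν'

/-- The strengthened relation `R_s = R ∧ S_fw(x) ∧ S_bw(x')`. -/
def Rs (R : DBC N) (ν ν' : Val N) : Prop := R.rel ν ν' ∧ Sfw R ν ∧ Sbw R ν'

/-- `R_fw`: the strongest forward one-directional DB relation implied by `R_s`. -/
def Rfw (R : DBC N) (ν ν' : Val N) : Prop :=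
  ∀ (i j : Fin N) (c : ℤ), (∀ μ μ', Rs R μ μ' → μ i - μ' j ≤ c) → ν i - ν' j ≤ c

/-- `R_bw`: the strongest backward one-directional DB relation implied by `R_s`. -/
def Rbw (R : DBC N) (ν ν' : Val N) : Prop :=
  ∀ (i j : Fin N) (c : ℤ), (∀ μ μ', Rs R μ μ' → μ' i - μ j ≤ c) → ν' i - ν j ≤ c

/- ## Corner decompositions -/

/-- The pumped path `η.μ^k.τ.μ'^k.η'`. -/
def pumped (η μ τ μ' η' : UPath N) (k : ℕ) : UPath N :=
  η.glue ((μ.pow k).glue (τ.glue ((μ'.pow k).glue η')))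

/-- The decomposition `ρ' = η.μ.τ.μ'.η'` of a right corner as in the corner
shortening / decomposition lemma. -/
def DecompRight (ρ' : UPath N) : Prop :=
  ∃ η μ τ μ' η' : UPath N,
    ρ' = η.append (μ.append (τ.append (μ'.append η'))) ∧
    μ.first = η.last ∧ τ.first = μ.last ∧ μ'.first = τ.last ∧ η'.first = μ'.last ∧
    μ.IsForward ∧ μ.IsRepeating ∧ μ'.IsBackward ∧ μ'.IsRepeating ∧
    τ.IsRightCorner ∧
    η.relLen = η'.relLen ∧
    1 ≤ μ.relLen ∧ μ.relLen = μ'.relLen ∧ μ.relLen ≤ (N : ℤ) ^ 2 ∧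
    μ.weight + μ'.weight < 0 ∧
    ∀ k : ℕ,
      (pumped η μ τ μ' η' k).IsRightCorner ∧
      (∀ θ : UPath N, θ.IsSubpath (η.glue (μ.pow k)) → ¬ θ.IsLBCorner) ∧
      (∀ θ : UPath N, θ.IsSubpath ((μ'.pow k).glue η') → ¬ θ.IsLBCorner)

/-- The decomposition `ρ' = η.μ.τ.μ'.η'` of a left corner as in the corner
shortening / decomposition lemma. -/
def DecompLeft (ρ' : UPath N) : Prop :=
  ∃ η μ τ μ' η' : UPath N,
    ρ' = η.append (μ.append (τ.append (μ'.append η'))) ∧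
    μ.first = η.last ∧ τ.first = μ.last ∧ μ'.first = τ.last ∧ η'.first = μ'.last ∧
    μ.IsBackward ∧ μ.IsRepeating ∧ μ'.IsForward ∧ μ'.IsRepeating ∧
    τ.IsLeftCorner ∧
    η.relLen = η'.relLen ∧
    1 ≤ μ.relLen ∧ μ.relLen = μ'.relLen ∧ μ.relLen ≤ (N : ℤ) ^ 2 ∧
    μ.weight + μ'.weight < 0 ∧
    ∀ k : ℕ,
      (pumped η μ τ μ' η' k).IsLeftCorner ∧
      (∀ θ : UPath N, θ.IsSubpath (η.glue (μ.pow k)) → ¬ θ.IsLBCorner) ∧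
      (∀ θ : UPath N, θ.IsSubpath ((μ'.pow k).glue η') → ¬ θ.IsLBCorner)

/- ## Balanced closure -/

/-- Swap an unprimed-unprimed atom with its primed-primed counterpart. -/
def flipAtom : Atom N → Atom N
  | (Sum.inl i, Sum.inl j, c) => (Sum.inr i, Sum.inr j, c)
  | (Sum.inr i, Sum.inr j, c) => (Sum.inl i, Sum.inl j, c)
  | a => a

/-- The balanced closure `R_b` of a DB constraint `R`. -/
def DBC.balClosure (R : DBC N) : DBC N := ⟨R.atoms ∪ R.atoms.image flipAtom⟩


/-
A long corner `θ` that is not basic revisits its start position `k` at an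
intermediate vertex; cutting it there splits it into two shorter vertical paths from `k` back
to `k` whose positions together are those of `θ`. One of the pieces reaches the far end of
`θ`, and since consecutive positions of a path in the unfolding differ by at most one, the
positions of that piece fill the whole interval of `θ`: it is again a long corner. So a shortest
long-corner subpath is basic.
-/

theorem List.IsChain.mem_of_le_of_le {l : List ℤ}
    (hl : l.IsChain fun x y => |y - x| ≤ 1) {a b m : ℤ} (ha : a ∈ l) (hb : b ∈ l)
    (ham : a ≤ m) (hmb : m ≤ b) : m ∈ l := by
  induction l generalizing a b with
  | nil => simp at ha
  | cons x t ih =>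
    rcases eq_or_ne m x with rfl | hmx
    · exact mem_cons_self
    obtain _ | ⟨y, t⟩ := t
    · simp_all only [mem_singleton]
      omega
    have hxy := abs_le.mp (isChain_cons_cons.mp hl).1
    have hl' := (isChain_cons_cons.mp hl).2
    refine mem_cons_of_mem _ ?_
    rcases mem_cons.mp ha with rfl | ha' <;> rcases mem_cons.mp hb with rfl | hb'
    · omega
    · exact ih hl' mem_cons_self hb' (by omega) hmb
    · exact ih hl' ha' mem_cons_self ham (by omega)
    · exact ih hl' ha' hb' ham hmb

theorem DBC.Edge.abs_sub_le_one {N : ℕ} {R : DBC N} {u v : Vtx N} {c : ℤ}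
    (h : R.Edge u v c) : |v.1 - u.1| ≤ 1 := by
  obtain ⟨p, s, t, -, rfl, rfl⟩ := h
  rw [abs_le]
  cases s <;> cases t <;> simp only [endpt] <;> omega

namespace UPath

variable {N : ℕ} {R : DBC N} {ρ θ γ α β : UPath N}

def minPos (ρ : UPath N) : ℤ := ρ.posFinset.min' ρ.posFinset_nonempty

def maxPos (ρ : UPath N) : ℤ := ρ.posFinset.max' ρ.posFinset_nonempty

theorem extent_eq : ρ.extent = ρ.maxPos - ρ.minPos := rfl

theorem mem_posFinset {x : ℤ} :
    x ∈ ρ.posFinset ↔ x = ρ.first.1 ∨ ∃ s ∈ ρ.steps, s.2.1 = x := by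
  simp [posFinset, posList, vertices, eq_comm]

theorem first_mem_posFinset : ρ.first.1 ∈ ρ.posFinset := mem_posFinset.mpr (.inl rfl)

theorem minPos_mem : ρ.minPos ∈ ρ.posFinset := Finset.min'_mem _ _

theorem maxPos_mem : ρ.maxPos ∈ ρ.posFinset := Finset.max'_mem _ _

theorem minPos_le {x : ℤ} (hx : x ∈ ρ.posFinset) : ρ.minPos ≤ x := Finset.min'_le _ _ hx

theorem le_maxPos {x : ℤ} (hx : x ∈ ρ.posFinset) : x ≤ ρ.maxPos := Finset.le_max' _ _ hx

theorem last_mk_append (f : Vtx N) (l₁ l₂ : List (ℤ × Vtx N)) :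
    (mk f (l₁ ++ l₂)).last = (mk (mk f l₁).last l₂).last := by
  simp only [last, List.map_append, List.getLastD_eq_getLast?, List.getLast?_append]
  cases (l₂.map Prod.snd).getLast? <;> rfl

theorem last_mk_cons (f : Vtx N) (s : ℤ × Vtx N) (l : List (ℤ × Vtx N)) :
    (mk f (s :: l)).last = (mk s.2 l).last := by
  simp only [last, List.map_cons, List.getLastD_cons]

theorem last_mem_posFinset : ρ.last.1 ∈ ρ.posFinset :=
  List.mem_toFinset.mpr (List.mem_map_of_mem List.getLastD_mem_cons)

theorem last_append (h : β.first = α.last) : (α.append β).last = β.last := by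
  rw [append, last_mk_append, ← h]

theorem posFinset_append (h : β.first = α.last) :
    (α.append β).posFinset = α.posFinset ∪ β.posFinset := by
  have hβ : β.first.1 ∈ α.posFinset := h ▸ last_mem_posFinset
  rw [mem_posFinset] at hβ
  ext x
  simp only [Finset.mem_union, mem_posFinset, append, List.mem_append]
  grind

theorem IsSubpath.trans (h₁ : θ.IsSubpath γ) (h₂ : γ.IsSubpath ρ) : θ.IsSubpath ρ := by
  obtain ⟨pre₁, post₁, hs₁, hf₁⟩ := h₁
  obtain ⟨pre₂, post₂, hs₂, hf₂⟩ := h₂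
  refine ⟨pre₂ ++ pre₁, post₁ ++ post₂, by simp [hs₂, hs₁], ?_⟩
  rw [hf₁, last_mk_append, ← hf₂]

theorem isSubpath_append_left : α.IsSubpath (α.append β) :=
  ⟨[], β.steps, by simp [append], rfl⟩

theorem isSubpath_append_right (h : β.first = α.last) : β.IsSubpath (α.append β) :=
  ⟨α.steps, [], by simp [append], h⟩

theorem edgeChain_append {E : Vtx N → Vtx N → ℤ → Prop} {f : Vtx N}
    {l₁ l₂ : List (ℤ × Vtx N)} :
    EdgeChain E f (l₁ ++ l₂) ↔ EdgeChain E f l₁ ∧ EdgeChain E (mk f l₁).last l₂ := by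
  induction l₁ generalizing f with
  | nil => simp [EdgeChain, last]
  | cons s l ih => simp only [List.cons_append, EdgeChain, ih, last_mk_cons, and_assoc]

theorem InUnf.of_isSubpath (hρ : ρ.InUnf R) (h : θ.IsSubpath ρ) : θ.InUnf R := by
  obtain ⟨pre, post, hs, hf⟩ := h
  unfold InUnf at hρ ⊢
  rw [hs, List.append_assoc, edgeChain_append, edgeChain_append, ← hf] at hρ
  exact hρ.2.1

theorem InUnf.posList_isChain (hρ : ρ.InUnf R) :
    ρ.posList.IsChain fun x y => |y - x| ≤ 1 := by
  obtain ⟨f, steps⟩ := ρ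
  induction steps generalizing f with
  | nil => exact List.isChain_singleton _
  | cons s t ih => exact List.isChain_cons_cons.mpr ⟨hρ.1.abs_sub_le_one, ih s.2 hρ.2⟩

theorem InUnf.posFinset_eq_Icc (hρ : ρ.InUnf R) :
    ρ.posFinset = Finset.Icc ρ.minPos ρ.maxPos := by
  ext x
  refine ⟨fun hx => Finset.mem_Icc.mpr ⟨minPos_le hx, le_maxPos hx⟩, fun hx => ?_⟩
  obtain ⟨hlo, hhi⟩ := Finset.mem_Icc.mp hx
  exact List.mem_toFinset.mpr <| hρ.posList_isChain.mem_of_le_of_le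
    (List.mem_toFinset.mp minPos_mem) (List.mem_toFinset.mp maxPos_mem) hlo hhi

theorem IsCorner.first_eq_minPos_or_maxPos (h : ρ.IsCorner) :
    ρ.first.1 = ρ.minPos ∨ ρ.first.1 = ρ.maxPos := by
  rcases h with ⟨-, -, d, hd⟩ | ⟨-, -, d, hd⟩
  · have := Finset.mem_Icc.mp (hd ▸ minPos_mem)
    exact .inl (le_antisymm this.1 (minPos_le first_mem_posFinset))
  · have := Finset.mem_Icc.mp (hd ▸ maxPos_mem)
    exact .inr (le_antisymm (le_maxPos first_mem_posFinset) this.2)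

theorem InUnf.isCorner (hρ : ρ.InUnf R) (hne : ρ.steps ≠ []) (hv : ρ.IsVertical)
    (hk : ρ.first.1 = ρ.minPos ∨ ρ.first.1 = ρ.maxPos) : ρ.IsCorner := by
  have hle : ρ.minPos ≤ ρ.maxPos := minPos_le maxPos_mem
  rcases hk with hk | hk
  · refine .inl ⟨hne, hv, (ρ.maxPos - ρ.minPos).toNat, ?_⟩
    rw [hρ.posFinset_eq_Icc, hk, Int.toNat_of_nonneg (by omega)]
    congr 1
    omega
  · refine .inr ⟨hne, hv, (ρ.maxPos - ρ.minPos).toNat, ?_⟩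
    rw [hρ.posFinset_eq_Icc, hk, Int.toNat_of_nonneg (by omega)]
    congr 1
    omega

theorem IsLongCorner.of_posFinset_subset (hθ : θ.IsLongCorner) (hγ : γ.InUnf R)
    (hne : γ.steps ≠ []) (hv : γ.IsVertical) (hfirst : γ.first.1 = θ.first.1)
    (hsub : γ.posFinset ⊆ θ.posFinset) (hmin : θ.minPos ∈ γ.posFinset)
    (hmax : θ.maxPos ∈ γ.posFinset) : γ.IsLongCorner := by
  have hγmin : γ.minPos = θ.minPos :=
    le_antisymm (minPos_le hmin) (Finset.min'_subset _ hsub)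
  have hγmax : γ.maxPos = θ.maxPos :=
    le_antisymm (Finset.max'_subset _ hsub) (le_maxPos hmax)
  refine ⟨hγ.isCorner hne hv ?_, ?_⟩
  · rw [hγmin, hγmax, hfirst]
    exact hθ.1.first_eq_minPos_or_maxPos
  · rw [extent_eq, hγmin, hγmax, ← extent_eq]
    exact hθ.2

theorem exists_append_eq_of_not_isBasic (h : ¬ θ.IsBasic) :
    ∃ α β : UPath N, θ = α.append β ∧ β.first = α.last ∧ α.steps ≠ [] ∧ β.steps ≠ [] ∧
      β.first.1 = θ.first.1 := by
  simp only [IsBasic, not_forall, not_not] at h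
  obtain ⟨s, hs, hsk⟩ := h
  have hne : θ.steps ≠ [] := by
    rintro h
    simp [h] at hs
  obtain ⟨pre, post, hdrop⟩ := List.append_of_mem hs
  have hsteps : θ.steps = pre ++ s :: post ++ [θ.steps.getLast hne] := by
    rw [← hdrop, List.dropLast_concat_getLast]
  generalize θ.steps.getLast hne = e at hsteps
  refine ⟨⟨θ.first, pre ++ [s]⟩, ⟨s.2, post ++ [e]⟩, ?_, by simp [last], by simp, by simp, hsk⟩
  cases θ
  simp_all [append]

theorem IsLongCorner.exists_shorter_of_not_isBasic (hθ : θ.IsLongCorner) (hθR : θ.InUnf R)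
    (hb : ¬ θ.IsBasic) :
    ∃ γ : UPath N, γ.IsSubpath θ ∧ γ.steps.length < θ.steps.length ∧ γ.IsLongCorner := by
  obtain ⟨α, β, rfl, hαβ, hα, hβ, hβk⟩ := exists_append_eq_of_not_isBasic hb
  have hv : (α.append β).IsVertical := by
    rcases hθ.1 with h | h <;> exact h.2.1
  have hαk : α.last.1 = α.first.1 := by rw [← hαβ]; exact hβk
  have hβv : β.IsVertical := by
    rw [IsVertical, ← last_append hαβ, hβk]; exact hv
  have hunion := posFinset_append hαβ
  have hαlen : α.steps.length < (α.append β).steps.length := by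
    simp [append, List.length_pos_iff.mpr hβ]
  have hβlen : β.steps.length < (α.append β).steps.length := by
    simp [append, List.length_pos_iff.mpr hα]
  have hαsub : α.posFinset ⊆ (α.append β).posFinset := hunion ▸ Finset.subset_union_left
  have hβsub : β.posFinset ⊆ (α.append β).posFinset := hunion ▸ Finset.subset_union_right
  have hαR := hθR.of_isSubpath isSubpath_append_left
  have hβR := hθR.of_isSubpath (isSubpath_append_right hαβ)
  have hk := hθ.1.first_eq_minPos_or_maxPos
  have hαk' : (α.append β).first.1 ∈ α.posFinset := first_mem_posFinset
  have hβk' : (α.append β).first.1 ∈ β.posFinset := hβk ▸ first_mem_posFinset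
  have hmin := hunion ▸ (α.append β).minPos_mem
  have hmax := hunion ▸ (α.append β).maxPos_mem
  rw [Finset.mem_union] at hmin hmax
  have hext : ((α.append β).minPos ∈ α.posFinset ∧ (α.append β).maxPos ∈ α.posFinset) ∨
      ((α.append β).minPos ∈ β.posFinset ∧ (α.append β).maxPos ∈ β.posFinset) := by
    grind
  rcases hext with ⟨hmin, hmax⟩ | ⟨hmin, hmax⟩
  · exact ⟨α, isSubpath_append_left, hαlen,
      hθ.of_posFinset_subset hαR hα hαk rfl hαsub hmin hmax⟩
  · exact ⟨β, isSubpath_append_right hαβ, hβlen,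
      hθ.of_posFinset_subset hβR hβ hβv hβk hβsub hmin hmax⟩

theorem InUnf.exists_isLBCorner_of_isLongCorner (hρ : ρ.InUnf R) (hθ : θ.IsSubpath ρ)
    (hlc : θ.IsLongCorner) : ∃ θ' : UPath N, θ'.IsSubpath ρ ∧ θ'.IsLBCorner := by
  induction hn : θ.steps.length using Nat.strong_induction_on generalizing θ with
  | _ n ih =>
    by_cases hb : θ.IsBasic
    · exact ⟨θ, hθ, hlc, hb⟩
    obtain ⟨γ, hγ, hlen, hγlc⟩ := hlc.exists_shorter_of_not_isBasic (hρ.of_isSubpath hθ) hb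
    exact ih _ (hn ▸ hlen) (hγ.trans hθ) hγlc rfl

end UPath

theorem statement10_general (N : ℕ) (R : DBC N) (ρ : UPath N)
    (hρ : ρ.InUnf R) :
    (∀ θ : UPath N, θ.IsSubpath ρ → ¬ θ.IsLBCorner) ↔
      (∀ θ : UPath N, θ.IsSubpath ρ → ¬ θ.IsLongCorner) := by
  refine ⟨fun h θ hθ hlc => ?_, fun h θ hθ hlb => h θ hθ hlb.1⟩
  obtain ⟨θ', hθ', hlb⟩ := hρ.exists_isLBCorner_of_isLongCorner hθ hlc
  exact h θ' hθ' hlb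

/-- A path has no lb-corner subpath iff it has no long-corner
subpath. -/
theorem statement10 (N : ℕ) (hN : 1 ≤ N) (R : DBC N) (ρ : UPath N)
    (hρ : ρ.InUnf R) :
    (∀ θ : UPath N, θ.IsSubpath ρ → ¬ θ.IsLBCorner) ↔
      (∀ θ : UPath N, θ.IsSubpath ρ → ¬ θ.IsLongCorner) :=
  statement10_general N R ρ hρ
end

section
/- Let ρ be a right corner of the form x_i^(k) →…→ x_j^(k) in an unfolding of the constraint graph of a difference bounds constraint over N variables, and let 1 ≤ d ≤ extent(ρ). Then ρ has a prefix subpath ρ' of the form x_i^(k) →…→ x_p^(k+d) for some 1 ≤ p ≤ N such that positions(ρ') = {k,…,k+d}. -/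
variable {N : ℕ}

theorem DBC.Edge.fst_le_fst_add_one {R : DBC N} {u v : Vtx N} {c : ℤ} (h : R.Edge u v c) :
    v.1 ≤ u.1 + 1 := by
  obtain ⟨p, s, t, -, rfl, rfl⟩ := h
  cases s <;> cases t <;> simp only [endpt] <;> omega

namespace UPath

@[simp]
theorem posFinset_nil (u : Vtx N) : (UPath.mk u []).posFinset = {u.1} := by
  simp [posFinset, posList, vertices]

@[simp]
theorem posFinset_cons (u : Vtx N) (s : ℤ × Vtx N) (rest : List (ℤ × Vtx N)) :
    (UPath.mk u (s :: rest)).posFinset = insert u.1 (UPath.mk s.2 rest).posFinset := by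
  simp [posFinset, posList, vertices]

@[simp]
theorem last_cons (u : Vtx N) (s : ℤ × Vtx N) (rest : List (ℤ × Vtx N)) :
    (UPath.mk u (s :: rest)).last = (UPath.mk s.2 rest).last := by
  simp only [last, List.map_cons, List.getLastD_cons]

theorem posFinset_subset_of_steps_eq_append {ρ ρ' : UPath N} {rest : List (ℤ × Vtx N)}
    (hsteps : ρ.steps = ρ'.steps ++ rest) (hfirst : ρ'.first = ρ.first) :
    ρ'.posFinset ⊆ ρ.posFinset := by
  intro z
  simp only [posFinset, posList, vertices, hsteps, hfirst, List.mem_toFinset, List.map_cons,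
    List.map_append, List.mem_cons, List.mem_append]
  tauto

theorem extent_eq_of_posFinset_eq_Icc {ρ : UPath N} {a b : ℤ}
    (h : ρ.posFinset = Finset.Icc a b) : ρ.extent = b - a := by
  have hab : a ≤ b := Finset.nonempty_Icc.mp (h ▸ ρ.posFinset_nonempty)
  have hmax : ρ.posFinset.max' ρ.posFinset_nonempty = b :=
    le_antisymm (Finset.max'_le _ _ _ fun y hy => (Finset.mem_Icc.mp (h ▸ hy)).2)
      (Finset.le_max' _ _ (h ▸ Finset.mem_Icc.mpr ⟨hab, le_rfl⟩))
  have hmin : ρ.posFinset.min' ρ.posFinset_nonempty = a :=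
    le_antisymm (Finset.min'_le _ _ (h ▸ Finset.mem_Icc.mpr ⟨le_rfl, hab⟩))
      (Finset.le_min' _ _ _ fun y hy => (Finset.mem_Icc.mp (h ▸ hy)).1)
  rw [extent, hmax, hmin]

/-- A discrete intermediate value theorem: the prefix up to the first visit of position `c`
cannot skip a position, since no edge climbs more than one position. -/
theorem exists_prefix_last_fst_eq {E : Vtx N → Vtx N → ℤ → Prop}
    (hE : ∀ u v w, E u v w → v.1 ≤ u.1 + 1) {ρ : UPath N} (hρ : EdgeChain E ρ.first ρ.steps)
    {c : ℤ} (hc : c ∈ ρ.posFinset) (hfc : ρ.first.1 ≤ c) :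
    ∃ (ρ' : UPath N) (rest : List (ℤ × Vtx N)),
      ρ.steps = ρ'.steps ++ rest ∧ ρ'.first = ρ.first ∧ ρ'.last.1 = c ∧
      (∀ z ∈ ρ'.posFinset, z ≤ c) ∧ Finset.Icc ρ.first.1 c ⊆ ρ'.posFinset := by
  obtain ⟨u, steps⟩ := ρ
  induction steps generalizing u with
  | nil =>
    obtain rfl : c = u.1 := by simpa using hc
    exact ⟨⟨u, []⟩, [], rfl, rfl, rfl, by simp, by simp⟩
  | cons s rest ih =>
    obtain ⟨hus, hchain⟩ := hρ
    have hup : s.2.1 ≤ u.1 + 1 := hE _ _ _ hus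
    simp only at hfc
    by_cases hcu : c = u.1
    · subst hcu
      exact ⟨⟨u, []⟩, s :: rest, rfl, rfl, rfl, by simp, by simp⟩
    obtain ⟨⟨first', steps'⟩, rest', hsteps, hfirst, hlast, hle, hIcc⟩ :=
      ih s.2 hchain (by simpa [hcu] using hc) (show s.2.1 ≤ c by omega)
    simp only at hsteps hfirst hle hIcc
    subst hsteps hfirst
    refine ⟨⟨u, s :: steps'⟩, rest', rfl, rfl, by simpa using hlast, ?_, fun z hz => ?_⟩
    · simpa [hfc] using hle
    · simp only [Finset.mem_Icc] at hz
      rw [posFinset_cons, Finset.mem_insert]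
      by_cases hzu : z = u.1
      · exact Or.inl hzu
      · exact Or.inr (hIcc (Finset.mem_Icc.mpr ⟨by omega, hz.2⟩))

end UPath

theorem statement12_general (N : ℕ) (R : DBC N) (ρ : UPath N)
    (hρ : ρ.InUnf R) (k : ℤ) (i : Fin N)
    (hf : ρ.first = (k, i))
    (hrc : ρ.IsRightCorner) (d : ℤ) (hd1 : 1 ≤ d) (hde : d ≤ ρ.extent) :
    ∃ (ρ' : UPath N) (rest : List (ℤ × Vtx N)),
      ρ.steps = ρ'.steps ++ rest ∧ ρ'.first = ρ.first ∧
      ρ'.last.1 = k + d ∧ ρ'.posFinset = Finset.Icc k (k + d) := by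
  obtain ⟨-, -, d₀, hpos⟩ := hrc
  rw [hf] at hpos
  have hext : ρ.extent = d₀ := by simpa using UPath.extent_eq_of_posFinset_eq_Icc hpos
  have hkd : k + d ∈ ρ.posFinset := by
    rw [hpos, Finset.mem_Icc]
    omega
  obtain ⟨ρ', rest, hsteps, hfirst, hlast, hle, hIcc⟩ :=
    UPath.exists_prefix_last_fst_eq (fun _ _ _ => DBC.Edge.fst_le_fst_add_one) hρ hkd
      (by rw [hf]; omega)
  refine ⟨ρ', rest, hsteps, hfirst, hlast,
    subset_antisymm (fun z hz => ?_) (by simpa [hf] using hIcc)⟩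
  have hzρ := UPath.posFinset_subset_of_steps_eq_append hsteps hfirst hz
  rw [hpos, Finset.mem_Icc] at hzρ
  exact Finset.mem_Icc.mpr ⟨hzρ.1, hle z hz⟩

/-- A right corner `x_i^(k) → … → x_j^(k)` has, for each
`1 ≤ d ≤ extent(ρ)`, a prefix subpath ending at position `k + d` whose positions
are exactly `{k, …, k+d}`. -/
theorem statement12 (N : ℕ) (hN : 1 ≤ N) (R : DBC N) (ρ : UPath N)
    (hρ : ρ.InUnf R) (k : ℤ) (i j : Fin N)
    (hf : ρ.first = (k, i)) (hl : ρ.last = (k, j))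
    (hrc : ρ.IsRightCorner) (d : ℤ) (hd1 : 1 ≤ d) (hde : d ≤ ρ.extent) :
    ∃ (ρ' : UPath N) (rest : List (ℤ × Vtx N)),
      ρ.steps = ρ'.steps ++ rest ∧ ρ'.first = ρ.first ∧
      ρ'.last.1 = k + d ∧ ρ'.posFinset = Finset.Icc k (k + d) :=
  statement12_general N R ρ hρ k i hf hrc d hd1 hde
end
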